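/- In the ring of rational functions ℚ(x, y, z), for every integer r ≥ 0 one has the identity: the expression (1/(2(x+y+z))) · ∑ over the three splittings {x},{y,z}; {y},{x,z}; {z},{x,y} of (first part sum)^2 (second part sum)^2 times the product of the degree-appropriate components of G(single variable) = 1/t^2 and G(two variables) = ∑_{s≥0} (uv(u+v))^s / (4^s (2s+1)!! (u+v)), extracting the total homogeneous degree 3r component, equals P_r(x,y,z) = (r!/(2^r (2r+1)!)) · ((xy)^r (x+y)^{r+1} + (yz)^r (y+z)^{r+1} + (zx)^r (z+x)^{r+1})/(x+y+z). -/

import Mathlib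

/-!
Only the `r' = 0` term of `G₁ * G₂` and the `r' = r` term of `G₂ * G₁` survive, since `G(t) = 1/t²`
has no component of positive genus. Each splitting therefore contributes
`2 (u+v)² G_r(u,v) = 2 (uv)^r (u+v)^(r+1) / (4^r (2r+1)‼)`, and
`(2r+1)! = 2^r r! (2r+1)‼` turns the constant into `r! / (2^r (2r+1)!)`.
-/

/-- `G_r(t)`: degree `3r-2` homogeneous component of the normalized 1-point
function `G(t) = 1/t²`. -/
noncomputable def G1 (r : ℕ) (t : ℝ) : ℝ := if r = 0 then 1 / t ^ 2 else 0

/-- `G_s(u,v)`: degree `3s-1` homogeneous component of the normalized 2-point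
function, namely `Δ(u,v)^s / (4^s (2s+1)!! (u+v))` with `Δ(u,v) = uv(u+v)`. -/
noncomputable def G2 (s : ℕ) (u v : ℝ) : ℝ :=
  (u * v * (u + v)) ^ s /
    (4 ^ s * ((∏ j ∈ Finset.range (s + 1), (2 * j + 1) : ℕ) : ℝ) * (u + v))

open Nat Finset

lemma prod_range_succ_two_mul_add_one (s : ℕ) :
    ∏ j ∈ range (s + 1), (2 * j + 1) = (2 * s + 1)‼ := by
  rw [prod_range_succ', doubleFactorial_eq_prod_odd, mul_zero, zero_add, mul_one]

lemma factorial_two_mul_add_one (r : ℕ) : (2 * r + 1)! = 2 ^ r * r ! * (2 * r + 1)‼ := by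
  rw [factorial_eq_mul_doubleFactorial, doubleFactorial_two_mul, mul_comm]

lemma G2_eq_doubleFactorial (s : ℕ) (u v : ℝ) :
    G2 s u v = (u * v * (u + v)) ^ s / (4 ^ s * ((2 * s + 1)‼ : ℝ) * (u + v)) := by
  rw [G2, prod_range_succ_two_mul_add_one]

lemma sq_mul_G2 (s : ℕ) (u v : ℝ) :
    (u + v) ^ 2 * G2 s u v = (u * v) ^ s * (u + v) ^ (s + 1) / (4 ^ s * ((2 * s + 1)‼ : ℝ)) := by
  rcases eq_or_ne (u + v) 0 with huv | huv
  · simp [G2, huv]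
  · have : ((2 * s + 1)‼ : ℝ) ≠ 0 := by positivity
    rw [G2_eq_doubleFactorial, mul_pow (u * v)]
    field_simp
    ring

lemma sum_G1_mul_G2 (r : ℕ) (t u v : ℝ) :
    ∑ r' ∈ range (r + 1), G1 r' t * G2 (r - r') u v = G2 r u v / t ^ 2 := by
  rw [sum_eq_single_of_mem 0 (by simp) fun b _ hb => by simp [G1, hb]]
  simp [G1, div_eq_inv_mul]

lemma sum_G2_mul_G1 (r : ℕ) (t u v : ℝ) :
    ∑ r' ∈ range (r + 1), G2 r' u v * G1 (r - r') t = G2 r u v / t ^ 2 := by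
  rw [sum_eq_single_of_mem r (self_mem_range_succ r) fun b hb hbr => by
    simp [G1, show r - b ≠ 0 by have := mem_range.1 hb; omega]]
  simp [G1, div_eq_mul_inv]

lemma splitting_contribution (r : ℕ) {t : ℝ} (ht : t ≠ 0) (u v : ℝ) :
    t ^ 2 * (u + v) ^ 2 * (G2 r u v / t ^ 2 + G2 r u v / t ^ 2) =
      2 * ((u * v) ^ r * (u + v) ^ (r + 1) / (4 ^ r * ((2 * r + 1)‼ : ℝ))) := by
  rw [← sq_mul_G2]
  field_simp
  ring

lemma factorial_div_two_pow_mul_factorial (r : ℕ) :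
    (r ! : ℝ) / (2 ^ r * ((2 * r + 1)! : ℝ)) = 1 / (4 ^ r * ((2 * r + 1)‼ : ℝ)) := by
  have : (r ! : ℝ) ≠ 0 := by positivity
  rw [factorial_two_mul_add_one, show (4 : ℝ) ^ r = 2 ^ r * 2 ^ r by rw [← mul_pow]; norm_num]
  push_cast
  field_simp

theorem stmt8_general (x y z : ℝ) (hx : x ≠ 0) (hy : y ≠ 0) (hz : z ≠ 0)
    (r : ℕ) :
    1 / (2 * (x + y + z)) *
      (x ^ 2 * (y + z) ^ 2 *
          ((∑ r' ∈ Finset.range (r + 1), G1 r' x * G2 (r - r') y z) +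
           (∑ r' ∈ Finset.range (r + 1), G2 r' y z * G1 (r - r') x)) +
       y ^ 2 * (z + x) ^ 2 *
          ((∑ r' ∈ Finset.range (r + 1), G1 r' y * G2 (r - r') z x) +
           (∑ r' ∈ Finset.range (r + 1), G2 r' z x * G1 (r - r') y)) +
       z ^ 2 * (x + y) ^ 2 *
          ((∑ r' ∈ Finset.range (r + 1), G1 r' z * G2 (r - r') x y) +
           (∑ r' ∈ Finset.range (r + 1), G2 r' x y * G1 (r - r') z))) =
    ((r.factorial : ℝ) / (2 ^ r * ((2 * r + 1).factorial : ℝ))) *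
      (((x * y) ^ r * (x + y) ^ (r + 1) + (y * z) ^ r * (y + z) ^ (r + 1) +
        (z * x) ^ r * (z + x) ^ (r + 1)) / (x + y + z)) := by
  simp only [sum_G1_mul_G2, sum_G2_mul_G1]
  rw [splitting_contribution r hx, splitting_contribution r hy, splitting_contribution r hz,
    factorial_div_two_pow_mul_factorial, one_div, mul_inv]
  ring

/-- Zagier's three-point function, from the Liu–Xu n-point recursion:
the sum is over the six ordered splittings of `{x,y,z}` into `I ⊔ J`. -/
theorem stmt8 (x y z : ℝ) (hx : x ≠ 0) (hy : y ≠ 0) (hz : z ≠ 0)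
    (hxy : x + y ≠ 0) (hyz : y + z ≠ 0) (hzx : z + x ≠ 0)
    (hxyz : x + y + z ≠ 0) (r : ℕ) :
    1 / (2 * (x + y + z)) *
      (x ^ 2 * (y + z) ^ 2 *
          ((∑ r' ∈ Finset.range (r + 1), G1 r' x * G2 (r - r') y z) +
           (∑ r' ∈ Finset.range (r + 1), G2 r' y z * G1 (r - r') x)) +
       y ^ 2 * (z + x) ^ 2 *
          ((∑ r' ∈ Finset.range (r + 1), G1 r' y * G2 (r - r') z x) +
           (∑ r' ∈ Finset.range (r + 1), G2 r' z x * G1 (r - r') y)) +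
       z ^ 2 * (x + y) ^ 2 *
          ((∑ r' ∈ Finset.range (r + 1), G1 r' z * G2 (r - r') x y) +
           (∑ r' ∈ Finset.range (r + 1), G2 r' x y * G1 (r - r') z))) =
    ((r.factorial : ℝ) / (2 ^ r * ((2 * r + 1).factorial : ℝ))) *
      (((x * y) ^ r * (x + y) ^ (r + 1) + (y * z) ^ r * (y + z) ^ (r + 1) +
        (z * x) ^ r * (z + x) ^ (r + 1)) / (x + y + z)) :=
  stmt8_general x y z hx hy hz r
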